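/- Let k = ℤ/3ℤ and let R be the mod-3 coinvariant algebra of S₃ as defined in the context. For the mutually orthogonal idempotents c = 2 + s₁₂₁ and c' = 2 + 2·s₁₂₁ of k[S₃], the ranges of the induced k-linear endomorphisms of R are: range(T_{c'}) = span_k{[1], [x₂], [x₁² + x₁x₂]} and range(T_{c}) = span_k{[2x₁ + x₂], [x₁x₂ + 2x₁²], [x₁²x₂]}. -/

import Mathlib

/-!
Over `𝔽₃` we have `2 = 1/2`, so for the involution `σ = s₁₂₁ = (x₁ x₃)` the elements
`c' = 2 + 2σ = (1 + σ)/2` and `c = 2 + σ = (1 - σ)/2` are complementary idempotents, and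
`T_{c'}`, `T_c` are the projections of `R` onto its `σ`-invariant and `σ`-anti-invariant parts.
In `R` we have `x₃ = -(x₁ + x₂)`, `x₂² = -(x₁² + x₁x₂)` and `x₁³ = 0`, so `R` is spanned by
`1, x₁, x₂, x₁x₂, x₁², x₁²x₂`. The three proposed generators of each range are `σ`-invariant,
resp. anti-invariant, and together they span these six monomials; for complementary idempotents
this forces each range to be exactly the proposed span.
-/

namespace Stmt3

noncomputable section

abbrev k := ZMod 3

/-- The polynomial ring `P = k[x₁, x₂, x₃]`. -/
abbrev P := MvPolynomial (Fin 3) k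

def x₁ : P := MvPolynomial.X 0
def x₂ : P := MvPolynomial.X 1

/-- The ideal generated by the elementary symmetric polynomials `e₁, e₂, e₃`. -/
def I : Ideal P := Ideal.span
  {MvPolynomial.esymm (Fin 3) k 1, MvPolynomial.esymm (Fin 3) k 2,
    MvPolynomial.esymm (Fin 3) k 3}

/-- The mod-3 coinvariant algebra of `S₃`. -/
abbrev R := P ⧸ I

/-- The quotient map `P → R` as a `k`-linear map. -/
def π : P →ₗ[k] R := (Ideal.Quotient.mkₐ k I).toLinearMap

/-- The action of a permutation `w` on `P` by permuting the variables,
as a `k`-linear map. -/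
def L (w : Equiv.Perm (Fin 3)) : P →ₗ[k] P := (MvPolynomial.rename ⇑w).toLinearMap

def t₁ : Equiv.Perm (Fin 3) := Equiv.swap 0 1
def t₂ : Equiv.Perm (Fin 3) := Equiv.swap 1 2

/-- The linear endomorphism `T_c` of `P` for the idempotent `c = 2 + s₁₂₁`. -/
def T : P →ₗ[k] P := (2 : k) • L 1 + L (t₁ * t₂ * t₁)

/-- The linear endomorphism `T_{c'}` of `P` for the idempotent `c' = 2 + 2·s₁₂₁`. -/
def T' : P →ₗ[k] P := (2 : k) • L 1 + (2 : k) • L (t₁ * t₂ * t₁)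

end

end Stmt3

open MvPolynomial

theorem Module.End.smul_one_add_smul_mul_of_mul_self_eq_one {K M : Type*} [CommSemiring K]
    [AddCommMonoid M] [Module K M] {s : Module.End K M} (hs : s * s = 1) (a b c d : K) :
    (a • 1 + b • s) * (c • 1 + d • s) = (a * c + b * d) • 1 + (a * d + b * c) • s := by
  simp only [add_mul, mul_add, smul_mul_smul, one_mul, mul_one, hs]
  module

theorem LinearMap.range_eq_of_isIdempotentElem_of_mul_eq_zero {K M : Type*} [Semiring K]
    [AddCommMonoid M] [Module K M] {e f : Module.End K M} (he : IsIdempotentElem e)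
    (hef : e * f = 0) {A B : Submodule K M} (hA : A ≤ range e) (hB : B ≤ range f)
    (hAB : A ⊔ B = ⊤) : range e = A := by
  refine le_antisymm (fun x hx => ?_) hA
  obtain ⟨a, ha, b, hb, rfl⟩ := Submodule.mem_sup.1 (hAB ▸ Submodule.mem_top : x ∈ A ⊔ B)
  obtain ⟨y, rfl⟩ := hB hb
  have hea : e a = a := (IsIdempotentElem.mem_range_iff he).1 (hA ha)
  have hefy : e (f y) = 0 := by rw [← Module.End.mul_apply, hef, zero_apply]
  have hfix : e (a + f y) = a + f y := (IsIdempotentElem.mem_range_iff he).1 hx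
  rw [map_add, hea, hefy, add_zero] at hfix
  rwa [← hfix]

theorem Submodule.mul_mem_span_of_mul_mem {K A : Type*} [CommSemiring K] [Semiring A]
    [Algebra K A] {S : Set A} {g : A} (h : ∀ s ∈ S, s * g ∈ span K S) {m : A} (hm : m ∈ span K S) :
    m * g ∈ span K S := by
  induction hm using Submodule.span_induction with
  | mem x hx => exact h x hx
  | zero => rw [zero_mul]; exact zero_mem _
  | add x y _ _ hx hy => rw [add_mul]; exact add_mem hx hy
  | smul a x _ hx => rw [smul_mul_assoc]; exact smul_mem _ a hx

theorem Submodule.eq_top_of_one_mem_of_mul_X_mem {σ K S : Type*} [CommSemiring K]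
    [CommSemiring S] [Algebra K S] {f : MvPolynomial σ K →ₐ[K] S} (hf : Function.Surjective f)
    {N : Submodule K S} (h1 : 1 ∈ N) (hX : ∀ i, ∀ m ∈ N, m * f (X i) ∈ N) : N = ⊤ := by
  refine N.eq_top_iff'.2 fun s => ?_
  obtain ⟨p, rfl⟩ := hf s
  induction p using MvPolynomial.induction_on with
  | C a =>
    rw [← algebraMap_eq, AlgHom.commutes, Algebra.algebraMap_eq_smul_one]
    exact smul_mem _ a h1
  | add p q hp hq => rw [map_add]; exact add_mem hp hq
  | mul_X p i hp => rw [map_mul]; exact hX i _ hp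

theorem MvPolynomial.esymm_fin_three (K : Type*) [CommSemiring K] :
    esymm (Fin 3) K 1 = X 0 + X 1 + X 2 ∧
      esymm (Fin 3) K 2 = X 0 * X 1 + X 0 * X 2 + X 1 * X 2 ∧
      esymm (Fin 3) K 3 = X 0 * X 1 * X 2 := by
  refine ⟨?_, ?_, ?_⟩ <;>
  · simp [esymm_eq_multiset_esymm, Finset.univ, Fintype.elems, List.finRange, Multiset.esymm,
      Multiset.powersetCard_coe, List.sublistsLen, List.sublistsLenAux]
    ring

namespace Stmt3

noncomputable section

theorem t₁_mul_t₂_mul_t₁ : t₁ * t₂ * t₁ = Equiv.swap 0 2 := by decide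

theorem I_le_comap_rename (w : Equiv.Perm (Fin 3)) : I ≤ I.comap (rename w) := by
  refine Ideal.span_le.2 ?_
  rintro _ (rfl | rfl | rfl) <;>
  · rw [SetLike.mem_coe, Ideal.mem_comap, rename_esymm]
    exact Ideal.subset_span (by simp)

def permuteVars (w : Equiv.Perm (Fin 3)) : R →ₐ[k] R :=
  Ideal.quotientMapₐ I (rename w) (I_le_comap_rename w)

theorem π_comp_L (w : Equiv.Perm (Fin 3)) : π ∘ₗ L w = (permuteVars w).toLinearMap ∘ₗ π := rfl

theorem permuteVars_permuteVars (v w : Equiv.Perm (Fin 3)) (r : R) :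
    permuteVars v (permuteVars w r) = permuteVars (v * w) r := by
  obtain ⟨p, rfl⟩ := Ideal.Quotient.mk_surjective r
  show Ideal.Quotient.mk I (rename _ (rename _ p)) = Ideal.Quotient.mk I (rename _ p)
  rw [Equiv.Perm.coe_mul, rename_rename]

theorem permuteVars_one (r : R) : permuteVars 1 r = r := by
  obtain ⟨p, rfl⟩ := Ideal.Quotient.mk_surjective r
  show Ideal.Quotient.mk I (rename _ p) = Ideal.Quotient.mk I p
  rw [Equiv.Perm.coe_one, rename_id_apply]

theorem π_apply (p : P) : π p = Ideal.Quotient.mk I p := rfl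

def ξ (i : Fin 3) : R := Ideal.Quotient.mk I (X i)

theorem permuteVars_ξ (w : Equiv.Perm (Fin 3)) (i : Fin 3) :
    permuteVars w (ξ i) = ξ (w i) := by
  show Ideal.Quotient.mk I (rename _ (X i)) = _
  rw [rename_X]; rfl

theorem ξ_relations : ξ 0 + ξ 1 + ξ 2 = 0 ∧ ξ 0 * ξ 1 + ξ 0 * ξ 2 + ξ 1 * ξ 2 = 0 ∧
    ξ 0 * ξ 1 * ξ 2 = 0 := by
  obtain ⟨h1, h2, h3⟩ := esymm_fin_three k
  simp only [ξ, ← map_add, ← map_mul, ← h1, ← h2, ← h3]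
  refine ⟨?_, ?_, ?_⟩ <;> exact Ideal.Quotient.eq_zero_iff_mem.2 (Ideal.subset_span (by simp))

theorem ξ_two : ξ 2 = -(ξ 0 + ξ 1) := by linear_combination ξ_relations.1

theorem ξ_one_sq : ξ 1 ^ 2 = -(ξ 0 ^ 2 + ξ 0 * ξ 1) := by
  linear_combination (ξ 0 + ξ 1) * ξ_relations.1 - ξ_relations.2.1

theorem ξ_zero_pow_three : ξ 0 ^ 3 = 0 := by
  linear_combination ξ 0 ^ 2 * ξ_relations.1 - ξ 0 * ξ_relations.2.1 + ξ_relations.2.2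

theorem span_monomials_eq_top :
    Submodule.span k {1, ξ 0, ξ 1, ξ 0 * ξ 1, ξ 0 ^ 2, ξ 0 ^ 2 * ξ 1} = ⊤ := by
  set N := Submodule.span k {1, ξ 0, ξ 1, ξ 0 * ξ 1, ξ 0 ^ 2, ξ 0 ^ 2 * ξ 1}
  have hgens : ∀ r ∈ ({1, ξ 0, ξ 1, ξ 0 * ξ 1, ξ 0 ^ 2, ξ 0 ^ 2 * ξ 1} : Set R), r ∈ N :=
    fun _ hr => Submodule.subset_span hr
  simp only [Set.mem_insert_iff, Set.mem_singleton_iff, forall_eq_or_imp, forall_eq] at hgens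
  obtain ⟨hone, hu, hv, huv, hu2, hu2v⟩ := hgens
  have h0 : ∀ m ∈ N, m * ξ 0 ∈ N := fun m => Submodule.mul_mem_span_of_mul_mem <| by
    rintro _ (rfl | rfl | rfl | rfl | rfl | rfl)
    · rwa [one_mul]
    · rwa [← sq]
    · convert huv using 1; ring
    · convert hu2v using 1; ring
    · rw [← pow_succ, ξ_zero_pow_three]; exact zero_mem N
    · rw [mul_right_comm, ← pow_succ, ξ_zero_pow_three, zero_mul]; exact zero_mem N
  have h1 : ∀ m ∈ N, m * ξ 1 ∈ N := fun m => Submodule.mul_mem_span_of_mul_mem <| by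
    rintro _ (rfl | rfl | rfl | rfl | rfl | rfl)
    · rwa [one_mul]
    · exact huv
    · rw [← sq, ξ_one_sq]; exact neg_mem (add_mem hu2 huv)
    · rw [show ξ 0 * ξ 1 * ξ 1 = -(ξ 0 ^ 2 * ξ 1) by
        linear_combination ξ 0 * ξ_one_sq - ξ_zero_pow_three]
      exact neg_mem hu2v
    · exact hu2v
    · rw [show ξ 0 ^ 2 * ξ 1 * ξ 1 = 0 by
        linear_combination ξ 0 ^ 2 * ξ_one_sq - (ξ 0 + ξ 1) * ξ_zero_pow_three]
      exact zero_mem N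
  refine Submodule.eq_top_of_one_mem_of_mul_X_mem (Ideal.Quotient.mkₐ_surjective k I) hone ?_
  intro i m hm
  fin_cases i
  · exact h0 m hm
  · exact h1 m hm
  · change m * ξ 2 ∈ N
    rw [show m * ξ 2 = -(m * ξ 0 + m * ξ 1) by rw [ξ_two]; ring]
    exact neg_mem (add_mem (h0 m hm) (h1 m hm))

theorem three_eq_zero : (3 : R) = 0 := by
  rw [← map_ofNat (algebraMap k R) 3, show (OfNat.ofNat 3 : k) = 0 from rfl, map_zero]

theorem permuteVars_swap_ξ_zero : permuteVars (Equiv.swap 0 2) (ξ 0) = -(ξ 0 + ξ 1) := by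
  rw [permuteVars_ξ, Equiv.swap_apply_left, ξ_two]

theorem permuteVars_swap_ξ_one : permuteVars (Equiv.swap 0 2) (ξ 1) = ξ 1 := by
  rw [permuteVars_ξ, Equiv.swap_apply_of_ne_of_ne (by decide) (by decide)]

/-- `T_c` on `R` for `c = a + b·s₁₂₁`, where `s₁₂₁ = t₁ * t₂ * t₁ = swap 0 2`. -/
def inducedEnd (a b : k) : Module.End k R :=
  a • 1 + b • (permuteVars (Equiv.swap 0 2)).toLinearMap

theorem π_comp_eq_inducedEnd_comp (a b : k) :
    π ∘ₗ (a • L 1 + b • L (t₁ * t₂ * t₁)) = inducedEnd a b ∘ₗ π := by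
  refine LinearMap.ext fun p => ?_
  simp only [LinearMap.comp_apply, LinearMap.add_apply, LinearMap.smul_apply, map_add, map_smul,
    ← LinearMap.comp_apply (f := π), π_comp_L, t₁_mul_t₂_mul_t₁, inducedEnd]
  simp [permuteVars_one]

theorem range_π_comp_T : LinearMap.range (π ∘ₗ T) = LinearMap.range (inducedEnd 2 1) := by
  rw [T, ← one_smul k (L (t₁ * t₂ * t₁)), π_comp_eq_inducedEnd_comp,
    LinearMap.range_comp_of_range_eq_top]
  exact LinearMap.range_eq_top.2 Ideal.Quotient.mk_surjective

theorem range_π_comp_T' : LinearMap.range (π ∘ₗ T') = LinearMap.range (inducedEnd 2 2) := by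
  rw [T', π_comp_eq_inducedEnd_comp, LinearMap.range_comp_of_range_eq_top]
  exact LinearMap.range_eq_top.2 Ideal.Quotient.mk_surjective

theorem inducedEnd_mul (a b c d : k) :
    inducedEnd a b * inducedEnd c d = inducedEnd (a * c + b * d) (a * d + b * c) := by
  refine Module.End.smul_one_add_smul_mul_of_mul_self_eq_one (LinearMap.ext fun r => ?_) a b c d
  simp [permuteVars_permuteVars, permuteVars_one]

theorem isIdempotentElem_inducedEnd_two_one : IsIdempotentElem (inducedEnd 2 1) := by
  rw [IsIdempotentElem, inducedEnd_mul]; rfl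

theorem isIdempotentElem_inducedEnd_two_two : IsIdempotentElem (inducedEnd 2 2) := by
  rw [IsIdempotentElem, inducedEnd_mul]; rfl

theorem inducedEnd_two_one_mul_two_two : inducedEnd 2 1 * inducedEnd 2 2 = 0 := by
  rw [inducedEnd_mul, show (2 * 2 + 1 * 2 : k) = 0 from rfl]
  simp [inducedEnd]

theorem inducedEnd_two_two_mul_two_one : inducedEnd 2 2 * inducedEnd 2 1 = 0 := by
  rw [inducedEnd_mul, show (2 * 2 + 2 * 1 : k) = 0 from rfl,
    show (2 * 1 + 2 * 2 : k) = 0 from rfl]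
  simp [inducedEnd]

theorem mem_range_inducedEnd_two_one_iff {r : R} :
    r ∈ LinearMap.range (inducedEnd 2 1) ↔ permuteVars (Equiv.swap 0 2) r = -r := by
  rw [LinearMap.IsIdempotentElem.mem_range_iff isIdempotentElem_inducedEnd_two_one]
  simp only [inducedEnd, LinearMap.add_apply, Module.End.one_apply, AlgHom.toLinearMap_apply,
    two_smul, one_smul]
  constructor <;> intro h <;> linear_combination h

theorem mem_range_inducedEnd_two_two_iff {r : R} :
    r ∈ LinearMap.range (inducedEnd 2 2) ↔ permuteVars (Equiv.swap 0 2) r = r := by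
  rw [LinearMap.IsIdempotentElem.mem_range_iff isIdempotentElem_inducedEnd_two_two]
  simp only [inducedEnd, LinearMap.add_apply, Module.End.one_apply, AlgHom.toLinearMap_apply,
    two_smul]
  constructor <;> intro h
  · linear_combination -h + permuteVars (Equiv.swap 0 2) r * three_eq_zero
  · linear_combination 2 * h + r * three_eq_zero

theorem span_le_range_inducedEnd_two_two :
    Submodule.span k {1, ξ 1, ξ 0 ^ 2 + ξ 0 * ξ 1} ≤ LinearMap.range (inducedEnd 2 2) := by
  rw [Submodule.span_le]
  rintro _ (rfl | rfl | rfl) <;>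
    simp only [SetLike.mem_coe, mem_range_inducedEnd_two_two_iff, map_one, map_add, map_mul,
      map_pow, permuteVars_swap_ξ_zero, permuteVars_swap_ξ_one]
  ring

theorem span_le_range_inducedEnd_two_one :
    Submodule.span k {2 * ξ 0 + ξ 1, ξ 0 * ξ 1 + 2 * ξ 0 ^ 2, ξ 0 ^ 2 * ξ 1} ≤
      LinearMap.range (inducedEnd 2 1) := by
  rw [Submodule.span_le]
  rintro _ (rfl | rfl | rfl) <;>
    simp only [SetLike.mem_coe, mem_range_inducedEnd_two_one_iff, map_ofNat, map_add, map_mul,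
      map_pow, permuteVars_swap_ξ_zero, permuteVars_swap_ξ_one]
  · ring
  · linear_combination ξ_one_sq + (ξ 0 ^ 2 + ξ 0 * ξ 1) * three_eq_zero
  · linear_combination (ξ 0 + ξ 1) * ξ_one_sq - ξ_zero_pow_three

theorem span_sup_span_eq_top :
    Submodule.span k {1, ξ 1, ξ 0 ^ 2 + ξ 0 * ξ 1} ⊔
      Submodule.span k {2 * ξ 0 + ξ 1, ξ 0 * ξ 1 + 2 * ξ 0 ^ 2, ξ 0 ^ 2 * ξ 1} = ⊤ := by
  set A := Submodule.span k {1, ξ 1, ξ 0 ^ 2 + ξ 0 * ξ 1}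
  set B := Submodule.span k {2 * ξ 0 + ξ 1, ξ 0 * ξ 1 + 2 * ξ 0 ^ 2, ξ 0 ^ 2 * ξ 1}
  have hA : ∀ r ∈ ({1, ξ 1, ξ 0 ^ 2 + ξ 0 * ξ 1} : Set R), r ∈ A ⊔ B :=
    fun _ hr => Submodule.mem_sup_left (Submodule.subset_span hr)
  have hB :
      ∀ r ∈ ({2 * ξ 0 + ξ 1, ξ 0 * ξ 1 + 2 * ξ 0 ^ 2, ξ 0 ^ 2 * ξ 1} : Set R), r ∈ A ⊔ B :=
    fun _ hr => Submodule.mem_sup_right (Submodule.subset_span hr)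
  simp only [Set.mem_insert_iff, Set.mem_singleton_iff, forall_eq_or_imp, forall_eq] at hA hB
  obtain ⟨ha₁, ha₂, ha₃⟩ := hA
  obtain ⟨hb₁, hb₂, hb₃⟩ := hB
  rw [eq_top_iff, ← span_monomials_eq_top, Submodule.span_le]
  rintro _ (rfl | rfl | rfl | rfl | rfl | rfl) <;> rw [SetLike.mem_coe]
  · exact ha₁
  · convert sub_mem ha₂ hb₁ using 1
    linear_combination ξ 0 * three_eq_zero
  · exact ha₂
  · convert neg_mem (add_mem ha₃ hb₂) using 1
    linear_combination (ξ 0 ^ 2 + ξ 0 * ξ 1) * three_eq_zero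
  · convert add_mem (add_mem ha₃ ha₃) hb₂ using 1
    linear_combination -(ξ 0 ^ 2 + ξ 0 * ξ 1) * three_eq_zero
  · exact hb₃

/-- The ranges of the endomorphisms of `R` induced by `T_{c'}` and `T_c`
(since the quotient map `π` is surjective and `T`, `T'` descend to `R`, the range
of the induced endomorphism of `R` is exactly the range of `π ∘ T : P → R`). -/
theorem range_induced_idempotents :
    LinearMap.range (π ∘ₗ T') =
      Submodule.span k {π 1, π x₂, π (x₁ ^ 2 + x₁ * x₂)} ∧
    LinearMap.range (π ∘ₗ T) =
      Submodule.span k {π (2 * x₁ + x₂), π (x₁ * x₂ + 2 * x₁ ^ 2), π (x₁ ^ 2 * x₂)} := by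
  simp only [π_apply, x₁, x₂, map_one, map_add, map_mul, map_pow, map_ofNat]
  rw [range_π_comp_T', range_π_comp_T]
  exact ⟨LinearMap.range_eq_of_isIdempotentElem_of_mul_eq_zero
      isIdempotentElem_inducedEnd_two_two inducedEnd_two_two_mul_two_one
      span_le_range_inducedEnd_two_two span_le_range_inducedEnd_two_one span_sup_span_eq_top,
    LinearMap.range_eq_of_isIdempotentElem_of_mul_eq_zero
      isIdempotentElem_inducedEnd_two_one inducedEnd_two_one_mul_two_two
      span_le_range_inducedEnd_two_one span_le_range_inducedEnd_two_two
      ((sup_comm _ _).trans span_sup_span_eq_top)⟩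

end

end Stmt3
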